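/- arXiv:1306.0131 — 2 statements merged into one kernel-verified Lean document; each statement's English description precedes it below -/
import Mathlib

section
/- Let f be a monic polynomial with integer coefficients such that f(0) ≠ 0 and every complex root of f has absolute value at most 1. Then every complex root of f is a root of unity. -/
/-!
Let `z` be a root of `f` and `K = ℚ(z)`. Every complex embedding of `K` sends `z` to another
root of `f`, so all conjugates of the algebraic integer `z` lie in the closed unit disc. The
powers of `z` are then algebraic integers of `K` with conjugates bounded by `1`, of which there
are only finitely many; hence `z ^ a = z ^ b` for some `a < b`, and `z ^ (b - a) = 1` because
`z ≠ 0`, which is where `f(0) ≠ 0` enters.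
-/

open Polynomial IntermediateField

theorem Complex.exists_pow_eq_one_of_isIntegral_of_roots_norm_le_one {z : ℂ}
    (hz : IsIntegral ℤ z) (hz0 : z ≠ 0) {p : ℤ[X]} (hpz : aeval z p = 0)
    (hp : ∀ w : ℂ, aeval w p = 0 → ‖w‖ ≤ 1) : ∃ n : ℕ, 0 < n ∧ z ^ n = 1 := by
  have : FiniteDimensional ℚ ℚ⟮z⟯ := adjoin.finiteDimensional hz.tower_top
  have : NumberField ℚ⟮z⟯ := ⟨⟩
  set x := AdjoinSimple.gen ℚ z
  have hxz : algebraMap ℚ⟮z⟯ ℂ x = z := rfl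
  have hx0 : x ≠ 0 := fun h => hz0 (by rw [← hxz, h, map_zero])
  have hxi : IsIntegral ℤ x := by
    rwa [← isIntegral_algebraMap_iff (algebraMap ℚ⟮z⟯ ℂ).injective]
  have hpx : aeval x p = 0 := by
    apply (algebraMap ℚ⟮z⟯ ℂ).injective
    rw [← aeval_algebraMap_apply, hxz, hpz, map_zero]
  have hconj (φ : ℚ⟮z⟯ →+* ℂ) : ‖φ x‖ ≤ 1 :=
    hp _ ((aeval_algHom_apply φ.toIntAlgHom x p).trans (by rw [hpx, map_zero]))
  obtain ⟨n, hn, hxn⟩ := NumberField.Embeddings.pow_eq_one_of_norm_le_one ℚ⟮z⟯ ℂ hx0 hxi hconj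
  exact ⟨n, hn, by rw [← hxz, ← map_pow, hxn, map_one]⟩

/-- Kronecker's lemma: if `f` is a monic integer polynomial with `f(0) ≠ 0` all of
whose complex roots have absolute value at most `1`, then every complex root of `f`
is a root of unity. -/
theorem kronecker_lemma (f : Polynomial ℤ) (hf : f.Monic) (h0 : f.eval 0 ≠ 0)
    (hroots : ∀ z : ℂ, Polynomial.aeval z f = 0 → ‖z‖ ≤ 1) :
    ∀ z : ℂ, Polynomial.aeval z f = 0 → ∃ n : ℕ, 0 < n ∧ z ^ n = 1 := by
  intro z hz
  have hz0 : z ≠ 0 := by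
    rintro rfl
    rw [aeval_def, eval₂_at_zero, algebraMap_int_eq, eq_intCast, Int.cast_eq_zero] at hz
    exact h0 (by rwa [← coeff_zero_eq_eval_zero])
  exact Complex.exists_pow_eq_one_of_isIntegral_of_roots_norm_le_one ⟨f, hf, hz⟩ hz0 hz hroots
end

section
/- Let a > b ≥ 1 be coprime integers and let n > 6. Then there exists a prime p that divides a^n − b^n but does not divide a^k − b^k for any k with 1 ≤ k < n. -/
/-!
Write `Φₙ(x, y) = y ^ φ(n) · Φₙ(x / y)` for the homogenised cyclotomic polynomial, so that
`aⁿ - bⁿ = ∏_{d ∣ n} Φ_d(a, b)`. If a prime `l` divides `Φₙ(a, b)`, then `a / b` is a root of `Φₙ`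
modulo `l`, so its order `m` is the `l`-free part of `n`, and `m ∣ l - 1`. If `l` is not a
primitive divisor, then `l ∣ n` and `l` is the largest prime factor of `n`; so without primitive
divisors `l` is the only prime factor of `Φₙ(a, b)`. Lifting the exponent, applied to
`Φₙ(a, b) ∣ (Aˡ - Bˡ) / (A - B)` with `A = a ^ (n / l) ≡ B = b ^ (n / l) (mod l)`, gives
`l² ∤ Φₙ(a, b)`, hence `Φₙ(a, b) = l`. This is too small once `n > 6`: with `n = l ^ (j + 1) * m`,
`A' = a ^ l ^ j` and `B' = b ^ l ^ j`, we have `Φₙ(a, b) = Φ_{l m}(A', B') = A' + B'` if `l = 2`,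
and `Φ_{l m}(A', B') = Φ_m(A'ˡ, B'ˡ) / Φ_m(A', B') ≥ A' ^ (l - 2)` otherwise.
-/

open Polynomial Finset

section CommRing

variable {R S : Type*} [CommRing R] [CommRing S]

noncomputable def cyclotomicForm (n : ℕ) (x y : R) : R :=
  MvPolynomial.eval ![x, y] ((cyclotomic n R).homogenize n.totient)

lemma map_cyclotomicForm (f : R →+* S) (n : ℕ) (x y : R) :
    f (cyclotomicForm n x y) = cyclotomicForm n (f x) (f y) := by
  rw [cyclotomicForm, cyclotomicForm, ← map_cyclotomic n f, homogenize_map, MvPolynomial.eval_map,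
    MvPolynomial.eval, MvPolynomial.coe_eval₂Hom, MvPolynomial.eval₂_comp_left]
  congr 1
  funext i
  fin_cases i <;> rfl

@[simp, norm_cast]
lemma Int.cast_cyclotomicForm (n : ℕ) (a b : ℤ) :
    ((cyclotomicForm n a b : ℤ) : R) = cyclotomicForm n (a : R) (b : R) :=
  map_cyclotomicForm (Int.castRingHom R) n a b

lemma cyclotomicForm_eq_eval_mul {K : Type*} [Field K] (n : ℕ) (x : K) {y : K} (hy : y ≠ 0) :
    cyclotomicForm n x y = (cyclotomic n K).eval (x / y) * y ^ n.totient :=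
  eval_homogenize (natDegree_cyclotomic n K).le ![x, y] hy

lemma cyclotomicForm_two (x y : R) : cyclotomicForm 2 x y = x + y := by
  simp [cyclotomicForm, cyclotomic_two, Nat.totient_two]

lemma prod_cyclotomicForm {n : ℕ} (hn : n ≠ 0) (x y : R) :
    ∏ d ∈ n.divisors, cyclotomicForm d x y = x ^ n - y ^ n := by
  nontriviality R
  have hdeg : ∀ d ∈ n.divisors, (cyclotomic d R).natDegree ≤ d.totient :=
    fun d _ => (natDegree_cyclotomic d R).le
  simp only [cyclotomicForm]
  rw [← map_prod, ← homogenize_finsetProd hdeg, Nat.sum_totient,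
    prod_cyclotomic_eq_X_pow_sub_one (Nat.pos_of_ne_zero hn), homogenize_sub,
    homogenize_X_pow le_rfl, homogenize_one]
  simp

lemma cyclotomicForm_dvd_pow_sub_pow {n : ℕ} (hn : n ≠ 0) (x y : R) :
    cyclotomicForm n x y ∣ x ^ n - y ^ n :=
  prod_cyclotomicForm hn x y ▸ dvd_prod_of_mem _ (Nat.mem_divisors_self n hn)

lemma cyclotomicForm_mul_pow_sub_pow_dvd {n s : ℕ} (hsn : s ∣ n) (hs : s < n) (x y : R) :
    cyclotomicForm n x y * (x ^ s - y ^ s) ∣ x ^ n - y ^ n := by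
  have hs0 : s ≠ 0 := by rintro rfl; simp at hsn; omega
  have hn : n ∉ s.divisors := fun h =>
    (Nat.le_of_dvd (by omega) (Nat.dvd_of_mem_divisors h)).not_gt hs
  rw [← prod_cyclotomicForm hs0, ← prod_cyclotomicForm (by omega : n ≠ 0),
    ← prod_insert (f := fun d => cyclotomicForm d x y) hn]
  refine prod_dvd_prod_of_subset _ _ _ (insert_subset (Nat.mem_divisors_self n (by omega)) ?_)
  exact Nat.divisors_subset_of_dvd (by omega) hsn

lemma cyclotomicForm_dvd_geom_sum₂ [IsDomain R] {n r : ℕ} (hr : 1 < r) (hrn : r ∣ n) {x y : R}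
    (hxy : x ^ (n / r) ≠ y ^ (n / r)) :
    cyclotomicForm n x y ∣ ∑ i ∈ range r, (x ^ (n / r)) ^ i * (y ^ (n / r)) ^ (r - 1 - i) := by
  obtain ⟨s, rfl⟩ := hrn
  rw [Nat.mul_div_cancel_left s (by omega)] at hxy ⊢
  have hs : s ≠ 0 := by rintro rfl; simp at hxy
  have h := cyclotomicForm_mul_pow_sub_pow_dvd (dvd_mul_left s r)
    (lt_mul_left (Nat.pos_of_ne_zero hs) hr) x y
  rwa [pow_mul', pow_mul', ← geom_sum₂_mul (x ^ s) (y ^ s) r,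
    mul_dvd_mul_iff_right (sub_ne_zero.mpr hxy)] at h

lemma IsCoprime.not_dvd_of_dvd_pow_sub_pow {a b p : R} (hab : IsCoprime a b) (hp : Prime p)
    {k : ℕ} (hk : k ≠ 0) (h : p ∣ a ^ k - b ^ k) : ¬ p ∣ a ∧ ¬ p ∣ b := by
  have hiff : p ∣ a ↔ p ∣ b := by
    rw [← hp.dvd_pow_iff_dvd (a := a) hk, ← hp.dvd_pow_iff_dvd (a := b) hk]
    exact dvd_iff_dvd_of_dvd_sub h
  have hboth : ¬ (p ∣ a ∧ p ∣ b) := fun ⟨ha, hb⟩ => hp.not_isUnit (hab.isUnit_of_dvd' ha hb)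
  tauto

end CommRing

section Field

variable {K : Type*} [Field K] {x y : K}

lemma cyclotomicForm_prime_mul_of_dvd {p k : ℕ} (hp : p.Prime) (hpk : p ∣ k) (hy : y ≠ 0) :
    cyclotomicForm (p * k) x y = cyclotomicForm k (x ^ p) (y ^ p) := by
  rw [cyclotomicForm_eq_eval_mul _ _ hy, cyclotomicForm_eq_eval_mul _ _ (pow_ne_zero p hy),
    mul_comm p k, ← cyclotomic_expand_eq_cyclotomic hp hpk, expand_eval, mul_comm k p,
    Nat.totient_mul_of_prime_of_dvd hp hpk, div_pow, pow_mul]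

lemma cyclotomicForm_prime_mul_mul_of_not_dvd {p k : ℕ} (hp : p.Prime) (hpk : ¬ p ∣ k)
    (hy : y ≠ 0) :
    cyclotomicForm (p * k) x y * cyclotomicForm k x y = cyclotomicForm k (x ^ p) (y ^ p) := by
  rw [cyclotomicForm_eq_eval_mul _ _ hy, cyclotomicForm_eq_eval_mul _ _ hy,
    cyclotomicForm_eq_eval_mul _ _ (pow_ne_zero p hy), ← div_pow, ← expand_eval,
    cyclotomic_expand_eq_cyclotomic_mul hp hpk, eval_mul, mul_comm k p,
    Nat.totient_mul_of_prime_of_not_dvd hp hpk, ← pow_mul]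
  have : p * k.totient = (p - 1) * k.totient + k.totient := by
    rw [← add_one_mul, Nat.sub_add_cancel hp.one_le]
  rw [this, pow_add]
  ring

lemma cyclotomicForm_prime_pow_succ_mul {p : ℕ} (hp : p.Prime) (j m : ℕ) (hy : y ≠ 0) :
    cyclotomicForm (p ^ (j + 1) * m) x y =
      cyclotomicForm (p * m) (x ^ p ^ j) (y ^ p ^ j) := by
  induction j generalizing x y with
  | zero => simp
  | succ j ih =>
    rw [pow_succ', mul_assoc,
      cyclotomicForm_prime_mul_of_dvd hp (dvd_mul_of_dvd_left (dvd_pow_self p j.succ_ne_zero) m) hy,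
      ih (pow_ne_zero p hy), ← pow_mul, ← pow_mul, ← pow_succ']

end Field

section Real

variable {x y : ℝ}

section

variable (hy : 0 < y) (hyx : y < x)
include hy hyx

lemma cyclotomicForm_pos (n : ℕ) : 0 < cyclotomicForm n x y := by
  rw [cyclotomicForm_eq_eval_mul n x hy.ne']
  exact mul_pos (cyclotomic_pos' n ((one_lt_div hy).mpr hyx)) (pow_pos hy _)

lemma sub_pow_totient_le_cyclotomicForm (n : ℕ) :
    (x - y) ^ n.totient ≤ cyclotomicForm n x y := calc
  (x - y) ^ n.totient = (x / y - 1) ^ n.totient * y ^ n.totient := by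
    rw [← mul_pow, sub_one_mul, div_mul_cancel₀ x hy.ne']
  _ ≤ cyclotomicForm n x y := by
    rw [cyclotomicForm_eq_eval_mul n x hy.ne']
    gcongr
    exact sub_one_pow_totient_le_cyclotomic_eval ((one_lt_div hy).mpr hyx) n

lemma sub_pow_totient_lt_cyclotomicForm {n : ℕ} (hn : 2 ≤ n) :
    (x - y) ^ n.totient < cyclotomicForm n x y := calc
  (x - y) ^ n.totient = (x / y - 1) ^ n.totient * y ^ n.totient := by
    rw [← mul_pow, sub_one_mul, div_mul_cancel₀ x hy.ne']
  _ < cyclotomicForm n x y := by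
    rw [cyclotomicForm_eq_eval_mul n x hy.ne']
    gcongr
    exact sub_one_pow_totient_lt_cyclotomic_eval hn ((one_lt_div hy).mpr hyx)

lemma cyclotomicForm_le_add_pow_totient (n : ℕ) :
    cyclotomicForm n x y ≤ (x + y) ^ n.totient := calc
  cyclotomicForm n x y ≤ (x / y + 1) ^ n.totient * y ^ n.totient := by
    rw [cyclotomicForm_eq_eval_mul n x hy.ne']
    gcongr
    exact cyclotomic_eval_le_add_one_pow_totient ((one_lt_div hy).mpr hyx) n
  _ = (x + y) ^ n.totient := by
    rw [← mul_pow, add_one_mul, div_mul_cancel₀ x hy.ne']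

end

lemma pow_sub_two_le_cyclotomicForm_prime_mul (hy : 0 < y) (hyx : y + 1 ≤ x)
    {l m : ℕ} (hl : l.Prime) (hlm : ¬ l ∣ m) :
    x ^ (l - 2) ≤ cyclotomicForm (l * m) x y := by
  have hxy : y < x := by linarith
  have hx : 1 ≤ x := by linarith
  have hφ : 1 ≤ m.totient := Nat.totient_pos.mpr (Nat.pos_of_ne_zero (by rintro rfl; simp at hlm))
  have hsplit : ∀ z : ℝ, z ^ l = z ^ (l - 2) * z ^ 2 := fun z => by
    rw [← pow_add, Nat.sub_add_cancel hl.two_le]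
  have hkey : x ^ (l - 2) * (x + y) ≤ x ^ l - y ^ l := by
    have hyl : y ^ (l - 2) ≤ x ^ (l - 2) := pow_le_pow_left₀ hy.le hxy.le _
    have hquad : 0 ≤ x ^ (l - 2) * (x ^ 2 - (x + y) - y ^ 2) :=
      mul_nonneg (by positivity) (by nlinarith)
    rw [hsplit x, hsplit y]
    nlinarith [mul_le_mul_of_nonneg_right hyl (sq_nonneg y)]
  have hP := cyclotomicForm_pos hy hxy m
  refine le_of_mul_le_mul_right ?_ hP
  calc x ^ (l - 2) * cyclotomicForm m x y
      ≤ (x ^ (l - 2)) ^ m.totient * (x + y) ^ m.totient := by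
        gcongr
        · exact le_self_pow₀ (one_le_pow₀ hx) (by omega)
        · exact cyclotomicForm_le_add_pow_totient hy hxy m
    _ = (x ^ (l - 2) * (x + y)) ^ m.totient := (mul_pow _ _ _).symm
    _ ≤ (x ^ l - y ^ l) ^ m.totient := by gcongr
    _ ≤ cyclotomicForm m (x ^ l) (y ^ l) :=
        sub_pow_totient_le_cyclotomicForm (pow_pos hy l) (pow_lt_pow_left₀ hxy hy.le hl.ne_zero) m
    _ = cyclotomicForm (l * m) x y * cyclotomicForm m x y :=
        (cyclotomicForm_prime_mul_mul_of_not_dvd hl hlm hy.ne').symm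

end Real

lemma Nat.lt_two_pow_sub_two {k : ℕ} (hk : 5 ≤ k) : k < 2 ^ (k - 2) := by
  induction k, hk using Nat.le_induction with
  | base => norm_num
  | succ k hk ih => rw [show k + 1 - 2 = k - 2 + 1 by omega, pow_succ]; omega

lemma Nat.Prime.le_of_dvd_pow_mul {l m r : ℕ} (hl : l.Prime) (hm : m ∣ l - 1) (hr : r.Prime)
    {j : ℕ} (hrn : r ∣ l ^ j * m) : r ≤ l := by
  rcases hr.dvd_mul.mp hrn with h | h
  · exact ((Nat.prime_dvd_prime_iff_eq hr hl).mp (hr.dvd_of_dvd_pow h)).le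
  · have hl1 : 0 < l - 1 := by have := hl.two_le; omega
    have := Nat.le_of_dvd hl1 hm
    have := Nat.le_of_dvd (Nat.pos_of_dvd_of_pos hm hl1) h
    omega

lemma four_dvd_pow_sub_pow_of_odd {x y : ℤ} (hx : Odd x) (hy : Odd y) {k : ℕ} (hk : Even k) :
    4 ∣ x ^ k - y ^ k := by
  obtain ⟨t, rfl⟩ := hk
  rw [← two_mul, pow_mul', pow_mul']
  have := Int.sq_mod_four_eq_one_of_odd (hx.pow (n := t))
  have := Int.sq_mod_four_eq_one_of_odd (hy.pow (n := t))
  omega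

lemma not_sq_dvd_geom_sum₂ {x y : ℤ} {l : ℕ} (hl : l.Prime) (hxy : (l : ℤ) ∣ x - y)
    (hx : ¬ (l : ℤ) ∣ x) (h2 : l = 2 → 4 ∣ x - y) :
    ¬ (l : ℤ) ^ 2 ∣ ∑ i ∈ range l, x ^ i * y ^ (l - 1 - i) := by
  rcases hl.eq_two_or_odd' with rfl | hodd
  · have := h2 rfl
    simp only [sum_range_succ, range_zero, sum_empty]
    norm_num at hx ⊢
    omega
  · rw [pow_dvd_iff_le_emultiplicity,
      emultiplicity_geom_sum₂_eq_one (Nat.prime_iff_prime_int.mp hl) hodd hxy hx]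
    norm_num

section Integer

variable {a b : ℤ}

lemma one_lt_cyclotomicForm (hb : 0 < b) (hba : b < a) {n : ℕ} (hn : 2 ≤ n) :
    1 < cyclotomicForm n a b := by
  have hlt := sub_pow_totient_lt_cyclotomicForm (x := (a : ℝ)) (y := b) (by exact_mod_cast hb)
    (by exact_mod_cast hba) hn
  have h1 : (1 : ℝ) ≤ ((a : ℝ) - b) ^ n.totient :=
    one_le_pow₀ (by have : b + 1 ≤ a := hba; linarith [(by exact_mod_cast this : (b : ℝ) + 1 ≤ a)])
  exact_mod_cast h1.trans_lt hlt

lemma exists_eq_pow_mul_of_prime_dvd_cyclotomicForm (hab : IsCoprime a b) {n l : ℕ}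
    (hn : n ≠ 0) (hl : l.Prime) (hlC : (l : ℤ) ∣ cyclotomicForm n a b) :
    ∃ j m, n = l ^ j * m ∧ m ∣ l - 1 ∧ ∀ k, (l : ℤ) ∣ a ^ k - b ^ k ↔ m ∣ k := by
  have := Fact.mk hl
  have hlb := (hab.not_dvd_of_dvd_pow_sub_pow (Nat.prime_iff_prime_int.mp hl) hn
    (hlC.trans (cyclotomicForm_dvd_pow_sub_pow hn a b))).2
  have hb : (b : ZMod l) ≠ 0 := by rwa [Ne, ZMod.intCast_zmod_eq_zero_iff_dvd]
  obtain ⟨j, m, hlm, rfl⟩ := Nat.exists_eq_pow_mul_and_not_dvd hn l hl.ne_one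
  have hm0 : m ≠ 0 := by rintro rfl; simp at hlm
  have : NeZero (m : ZMod l) := ⟨by rwa [Ne, ZMod.natCast_eq_zero_iff]⟩
  have hroot : IsPrimitiveRoot ((a : ZMod l) / b) m := by
    rw [← isRoot_cyclotomic_prime_pow_mul_iff_of_charP (k := j), IsRoot.def]
    have h0 := (ZMod.intCast_zmod_eq_zero_iff_dvd _ l).mpr hlC
    rw [Int.cast_cyclotomicForm, cyclotomicForm_eq_eval_mul _ _ hb] at h0
    exact (mul_eq_zero.mp h0).resolve_right (pow_ne_zero _ hb)
  refine ⟨j, m, rfl, ?_, fun k => ?_⟩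
  · rw [hroot.eq_orderOf]
    exact ZMod.orderOf_dvd_card_sub_one (hroot.ne_zero hm0)
  · rw [← ZMod.intCast_zmod_eq_zero_iff_dvd, Int.cast_sub, Int.cast_pow, Int.cast_pow, sub_eq_zero,
      ← hroot.pow_eq_one_iff_dvd, div_pow, div_eq_one_iff_eq (pow_ne_zero _ hb)]

lemma exists_eq_pow_succ_mul_of_prime_dvd_cyclotomicForm (hab : IsCoprime a b) {n l : ℕ}
    (hn : n ≠ 0) (hl : l.Prime) (hlC : (l : ℤ) ∣ cyclotomicForm n a b)
    (hk : ∃ k, 1 ≤ k ∧ k < n ∧ (l : ℤ) ∣ a ^ k - b ^ k) :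
    ∃ j m, n = l ^ (j + 1) * m ∧ m ∣ l - 1 ∧ (l : ℤ) ∣ a ^ (l ^ j * m) - b ^ (l ^ j * m) := by
  obtain ⟨j, m, rfl, hm, hiff⟩ := exists_eq_pow_mul_of_prime_dvd_cyclotomicForm hab hn hl hlC
  obtain ⟨k, hk1, hkn, hlk⟩ := hk
  obtain _ | j := j
  · have := Nat.le_of_dvd hk1 ((hiff k).mp hlk)
    simp at hkn
    omega
  · exact ⟨j, m, rfl, hm, (hiff _).mpr (dvd_mul_left m _)⟩

variable {l j m : ℕ} (hl : l.Prime) (hm : m ∣ l - 1) (hn : 6 < l ^ (j + 1) * m)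
include hl hm hn

lemma prime_lt_cyclotomicForm (hb : 1 ≤ b) (hba : b < a) :
    (l : ℤ) < cyclotomicForm (l ^ (j + 1) * m) a b := by
  set A := a ^ l ^ j
  set B := b ^ l ^ j
  have hB : 1 ≤ B := one_le_pow₀ hb
  have hBA : B < A := pow_lt_pow_left₀ hba (by omega) (pow_ne_zero j hl.ne_zero)
  have hA : (2 : ℤ) ^ l ^ j ≤ A := pow_le_pow_left₀ (by norm_num) (by omega : (2 : ℤ) ≤ a) _
  have hform : cyclotomicForm (l ^ (j + 1) * m) a b = cyclotomicForm (l * m) A B :=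
    Int.cast_injective (α := ℚ) <| by
      have hb0 : (b : ℚ) ≠ 0 := Int.cast_ne_zero.mpr (by omega)
      push_cast [A, B]
      exact cyclotomicForm_prime_pow_succ_mul hl j m hb0
  rw [hform]
  rcases hl.eq_two_or_odd with rfl | hodd
  · rw [Nat.dvd_one.mp hm, mul_one, cyclotomicForm_two]
    have : (2 : ℤ) ≤ 2 ^ 2 ^ j := le_self_pow₀ (by norm_num) (by positivity)
    omega
  have hl3 : 3 ≤ l := by have := hl.two_le; omega
  have hm0 : 0 < m := Nat.pos_of_dvd_of_pos hm (by omega)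
  have hlm : ¬ l ∣ m := fun h => by
    have := Nat.le_of_dvd hm0 h
    have := Nat.le_of_dvd (by omega) hm
    omega
  have hlow : A ^ (l - 2) ≤ cyclotomicForm (l * m) A B := by
    exact_mod_cast pow_sub_two_le_cyclotomicForm_prime_mul (x := (A : ℝ)) (y := B)
      (by exact_mod_cast hB) (by exact_mod_cast hBA) hl hlm
  refine lt_of_lt_of_le ?_ hlow
  rcases j with _ | j
  · have hl5 : 5 ≤ l := by
      have : l ≠ 3 := by
        rintro rfl
        have := Nat.le_of_dvd (by norm_num) hm
        omega
      omega
    calc (l : ℤ) < 2 ^ (l - 2) := by exact_mod_cast Nat.lt_two_pow_sub_two hl5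
      _ ≤ A ^ (l - 2) := pow_le_pow_left₀ (by norm_num) (by simpa using hA) _
  · calc (l : ℤ) < 2 ^ l := by exact_mod_cast Nat.lt_two_pow_self
      _ ≤ 2 ^ l ^ (j + 1) := pow_le_pow_right₀ (by norm_num) (Nat.le_self_pow j.succ_ne_zero l)
      _ ≤ A := hA
      _ ≤ A ^ (l - 2) := le_self_pow₀ (by omega) (by omega)

lemma not_sq_dvd_cyclotomicForm (hb : 0 ≤ b) (hba : b < a) (hla : ¬ (l : ℤ) ∣ a)
    (hlb : ¬ (l : ℤ) ∣ b) (hlab : (l : ℤ) ∣ a ^ (l ^ j * m) - b ^ (l ^ j * m)) :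
    ¬ (l : ℤ) ^ 2 ∣ cyclotomicForm (l ^ (j + 1) * m) a b := by
  have hm0 : m ≠ 0 := by rintro rfl; simp at hn
  have hquot : l ^ (j + 1) * m / l = l ^ j * m := by
    rw [pow_succ', mul_assoc, Nat.mul_div_cancel_left _ hl.pos]
  have hne : a ^ (l ^ j * m) ≠ b ^ (l ^ j * m) :=
    (pow_lt_pow_left₀ hba hb (by positivity [hl.ne_zero])).ne'
  have hdvd := cyclotomicForm_dvd_geom_sum₂ hl.one_lt
    (dvd_mul_of_dvd_left (dvd_pow_self l j.succ_ne_zero) m) (x := a) (y := b) (by rwa [hquot])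
  rw [hquot] at hdvd
  refine fun h => not_sq_dvd_geom_sum₂ hl hlab
    (fun h' => hla ((Nat.prime_iff_prime_int.mp hl).dvd_of_dvd_pow h')) ?_ (h.trans hdvd)
  rintro rfl
  obtain rfl : m = 1 := Nat.dvd_one.mp hm
  have hj : j ≠ 0 := by rintro rfl; norm_num at hn
  have hodd : ∀ x : ℤ, ¬ ((2 : ℕ) : ℤ) ∣ x → Odd x := fun x hx =>
    Int.not_even_iff_odd.mp (by rwa [even_iff_two_dvd])
  exact four_dvd_pow_sub_pow_of_odd (hodd a hla) (hodd b hlb)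
    ((Nat.even_pow.mpr ⟨even_two, hj⟩).mul_right 1)

end Integer

/-- Zsigmondy–Bang theorem: for coprime integers `a > b ≥ 1` and `n > 6`, there is a
prime dividing `a^n − b^n` that divides no `a^k − b^k` with `1 ≤ k < n`. -/
theorem zsigmondy_bang (a b : ℤ) (hba : b < a) (hb : 1 ≤ b) (hab : IsCoprime a b)
    (n : ℕ) (hn : 6 < n) :
    ∃ p : ℕ, p.Prime ∧ (p : ℤ) ∣ a ^ n - b ^ n ∧
      ∀ k : ℕ, 1 ≤ k → k < n → ¬ (p : ℤ) ∣ a ^ k - b ^ k := by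
  by_contra! hcon
  have hn0 : n ≠ 0 := by omega
  have hdvd : ∀ {p : ℕ}, (p : ℤ) ∣ cyclotomicForm n a b → (p : ℤ) ∣ a ^ n - b ^ n :=
    fun h => h.trans (cyclotomicForm_dvd_pow_sub_pow hn0 a b)
  have hC : 1 < cyclotomicForm n a b := one_lt_cyclotomicForm (by omega) hba (by omega)
  obtain ⟨l, hl, hlC⟩ := Nat.exists_prime_and_dvd (n := (cyclotomicForm n a b).natAbs) (by omega)
  rw [← Int.natCast_dvd] at hlC
  obtain ⟨hla, hlb⟩ :=
    hab.not_dvd_of_dvd_pow_sub_pow (Nat.prime_iff_prime_int.mp hl) hn0 (hdvd hlC)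
  obtain ⟨j, m, rfl, hm, hlab⟩ :=
    exists_eq_pow_succ_mul_of_prime_dvd_cyclotomicForm hab hn0 hl hlC (hcon l hl (hdvd hlC))
  -- a prime factor `r` of `Φₙ(a, b) / l` is again `l`, so `l ^ 2 ∣ Φₙ(a, b)`
  obtain ⟨c, hc⟩ := hlC
  have hc1 : 1 < c := by
    have := prime_lt_cyclotomicForm hl hm hn hb hba
    rw [hc] at this
    nlinarith
  obtain ⟨r, hr, hrc⟩ := Nat.exists_prime_and_dvd (n := c.natAbs) (by omega)
  rw [← Int.natCast_dvd] at hrc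
  have hrC : (r : ℤ) ∣ cyclotomicForm (l ^ (j + 1) * m) a b := hc ▸ dvd_mul_of_dvd_right hrc _
  obtain ⟨i, m', hn', hm', -⟩ :=
    exists_eq_pow_succ_mul_of_prime_dvd_cyclotomicForm hab hn0 hr hrC (hcon r hr (hdvd hrC))
  obtain rfl : r = l := le_antisymm
    (hl.le_of_dvd_pow_mul hm hr (hn' ▸ dvd_mul_of_dvd_left (dvd_pow_self r i.succ_ne_zero) m'))
    (hr.le_of_dvd_pow_mul hm' hl (hn' ▸ dvd_mul_of_dvd_left (dvd_pow_self l j.succ_ne_zero) m))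
  exact not_sq_dvd_cyclotomicForm hl hm hn (by omega) hba hla hlb hlab
    (hc ▸ pow_two (r : ℤ) ▸ mul_dvd_mul_left _ hrc)
end
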